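/- Let n ≥ 1, Ω ⊆ ℝ^n open, g : ℝ → ℝ continuously differentiable with antiderivative G(y) = ∫₀^y g(t) dt, and u : Ω → ℝ smooth. Then pointwise in Ω: div((x·Du)·Du − (½|Du|² − G(u))·x) = (x·Du)(Δu + g(u)) − ((n−2)/2)|Du|² + n·G(u). -/

import Mathlib

open MeasureTheory Filter Topology RealInnerProductSpace

/-- Divergence of a vector field on `ℝⁿ`: the sum of the `i`-th partial derivatives of the
`i`-th components. -/
noncomputable def vecDiv {n : ℕ}
    (F : EuclideanSpace ℝ (Fin n) → EuclideanSpace ℝ (Fin n))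
    (x : EuclideanSpace ℝ (Fin n)) : ℝ :=
  ∑ i, fderiv ℝ F x (EuclideanSpace.single i 1) i

/-- The Laplacian, as the divergence of the gradient. -/
noncomputable def lap {n : ℕ} (u : EuclideanSpace ℝ (Fin n) → ℝ)
    (x : EuclideanSpace ℝ (Fin n)) : ℝ :=
  vecDiv (fun y => gradient u y) x

private lemma sum_inner' {n : ℕ} (a b : EuclideanSpace ℝ (Fin n)) :
    ∑ i, a i * b i = (⟪a, b⟫ : ℝ) := by
  simp [PiLp.inner_apply, RCLike.inner_apply, conj_trivial]
  exact Finset.sum_congr rfl fun _ _ => mul_comm _ _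

/-- Pohozaev-type divergence identity:
`div((x·Du)·Du − (½|Du|² − G(u))·x) = (x·Du)(Δu + g(u)) − ((n−2)/2)|Du|² + n·G(u)` in `Ω`. -/
theorem pohozaev_divergence_identity {n : ℕ} (hn : 1 ≤ n)
    (Ω : Set (EuclideanSpace ℝ (Fin n))) (hΩ : IsOpen Ω)
    (g : ℝ → ℝ) (hg : ContDiff ℝ 1 g) (G : ℝ → ℝ)
    (hG : ∀ y : ℝ, G y = ∫ t in (0 : ℝ)..y, g t)
    (u : EuclideanSpace ℝ (Fin n) → ℝ) (hu : ContDiffOn ℝ (⊤ : ℕ∞) u Ω) :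
    ∀ x ∈ Ω,
      vecDiv (fun y => (⟪y, gradient u y⟫ : ℝ) • gradient u y
          - ((1 / 2) * ‖gradient u y‖ ^ 2 - G (u y)) • y) x
        = (⟪x, gradient u x⟫ : ℝ) * (lap u x + g (u x))
          - ((n - 2 : ℝ) / 2) * ‖gradient u x‖ ^ 2 + n * G (u x) := by
  intro x hx
  have hmem : Ω ∈ 𝓝 x := hΩ.mem_nhds hx
  have hux : ContDiffAt ℝ (⊤ : ℕ∞) u x := hu.contDiffAt hmem
  have hud : DifferentiableAt ℝ u x := hux.differentiableAt (by simp)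
  have hD : ContDiffAt ℝ 2 (fderiv ℝ u) x := hux.fderiv_right (WithTop.coe_le_coe.mpr le_top)
  have hgradeq : (fun y => gradient u y) =
      ((InnerProductSpace.toDual ℝ (EuclideanSpace ℝ (Fin n))).symm ∘ fderiv ℝ u) := rfl
  have hv : ContDiffAt ℝ 2 (fun y => gradient u y) x := by
    rw [hgradeq]
    exact ((InnerProductSpace.toDual ℝ _).symm.contDiff.contDiffAt).comp x hD
  have hvd : DifferentiableAt ℝ (fun y => gradient u y) x :=
    hv.differentiableAt (by norm_num)
  set v : EuclideanSpace ℝ (Fin n) := gradient u x with hvdef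
  set H := fderiv ℝ (fun y => gradient u y) x with hHdef
  -- inner product with gradient gives the derivative
  have hgrad : ∀ (y h : EuclideanSpace ℝ (Fin n)),
      (⟪gradient u y, h⟫ : ℝ) = fderiv ℝ u y h := fun y h => by
    simp [gradient, InnerProductSpace.toDual_symm_apply]
  -- symmetry of the second derivative
  have hsymm : IsSymmSndFDerivAt ℝ u x := hux.isSymmSndFDerivAt (by rw [minSmoothness_of_isRCLikeNormedField]; exact WithTop.coe_le_coe.mpr (le_top : (2 : ℕ∞) ≤ ⊤))
  have hH : ∀ a b : EuclideanSpace ℝ (Fin n),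
      (⟪a, H b⟫ : ℝ) = fderiv ℝ (fderiv ℝ u) x b a := by
    intro a b
    have h2 : DifferentiableAt ℝ (fderiv ℝ u) x := hD.differentiableAt (by norm_num)
    have e1 : fderiv ℝ (fun y => (⟪gradient u y, a⟫ : ℝ)) x b = ⟪H b, a⟫ := by
      rw [fderiv_inner_apply ℝ hvd (differentiableAt_const a)]
      simp
      rfl
    have e2 : (fun y => (⟪gradient u y, a⟫ : ℝ)) = fun y => (fderiv ℝ u y) a := by
      funext y; exact hgrad y a
    have e3 : fderiv ℝ (fun y => (fderiv ℝ u y) a) x b = (fderiv ℝ (fderiv ℝ u) x b) a := by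
      rw [fderiv_clm_apply h2 (differentiableAt_const a)]
      simp
    rw [real_inner_comm, ← e1, e2, e3]
  have hHsym : ∀ a b : EuclideanSpace ℝ (Fin n), (⟪a, H b⟫ : ℝ) = ⟪b, H a⟫ := by
    intro a b; rw [hH, hH, hsymm b a]
  -- derivative of G
  have hGder : ∀ t : ℝ, HasDerivAt G (g t) t := by
    intro t
    have h1 : G = fun y => ∫ s in (0 : ℝ)..y, g s := funext hG
    rw [h1]
    exact (hg.continuous.integral_hasStrictDerivAt 0 t).hasDerivAt
  -- derivative of the scalar field c y = ⟪y, ∇u y⟫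
  have hcd : DifferentiableAt ℝ (fun y => (⟪y, gradient u y⟫ : ℝ)) x :=
    differentiableAt_fun_id.inner ℝ hvd
  have hc' : ∀ e, fderiv ℝ (fun y => (⟪y, gradient u y⟫ : ℝ)) x e
      = (⟪x, H e⟫ : ℝ) + ⟪v, e⟫ := by
    intro e
    rw [fderiv_inner_apply ℝ differentiableAt_fun_id hvd]
    simp [real_inner_comm v e]
    exact congrArg₂ (· + ·) rfl (hgrad x e).symm
  -- derivative of G ∘ u
  have hGuF : HasFDerivAt (fun y => G (u y))
      ((ContinuousLinearMap.smulRight (1 : ℝ →L[ℝ] ℝ) (g (u x))).comp (fderiv ℝ u x)) x :=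
    (hGder (u x)).hasFDerivAt.comp x hud.hasFDerivAt
  -- the scalar field s
  set s : EuclideanSpace ℝ (Fin n) → ℝ :=
    fun y => (1 / 2) * ‖gradient u y‖ ^ 2 - G (u y) with hsdef
  have hseq : s = fun y => (1 / 2) * (⟪gradient u y, gradient u y⟫ : ℝ) - G (u y) := by
    funext y
    show (1 / 2) * ‖gradient u y‖ ^ 2 - G (u y) = _
    rw [real_inner_self_eq_norm_sq]
  have hqd : DifferentiableAt ℝ
      (fun y => (⟪gradient u y, gradient u y⟫ : ℝ)) x := hvd.inner ℝ hvd
  have hsd : DifferentiableAt ℝ s x := by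
    rw [hseq]
    exact (hqd.const_mul _).sub hGuF.differentiableAt
  have hs' : ∀ e, fderiv ℝ s x e = (⟪v, H e⟫ : ℝ) - g (u x) * ⟪v, e⟫ := by
    intro e
    rw [hseq, fderiv_fun_sub (hqd.const_mul _) hGuF.differentiableAt]
    rw [ContinuousLinearMap.sub_apply, fderiv_const_mul hqd, hGuF.fderiv]
    rw [ContinuousLinearMap.smul_apply, smul_eq_mul,
      fderiv_inner_apply ℝ hvd hvd]
    simp only [ContinuousLinearMap.comp_apply, ContinuousLinearMap.smulRight_apply,
      ContinuousLinearMap.one_apply, smul_eq_mul, ← hgrad x e]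
    rw [real_inner_comm (H e) v]
    ring
  -- differentiability of the two vector fields
  have hAd : DifferentiableAt ℝ
      (fun y => (⟪y, gradient u y⟫ : ℝ) • gradient u y) x := hcd.smul hvd
  have hBd : DifferentiableAt ℝ (fun y => s y • y) x := hsd.smul differentiableAt_fun_id
  have hfA : fderiv ℝ (fun y => (⟪y, gradient u y⟫ : ℝ) • gradient u y) x
      = (⟪x, v⟫ : ℝ) • H + (fderiv ℝ (fun y => (⟪y, gradient u y⟫ : ℝ)) x).smulRight v :=
    fderiv_smul hcd hvd
  have hfB : fderiv ℝ (fun y => s y • y) x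
      = s x • ContinuousLinearMap.id ℝ _ + (fderiv ℝ s x).smulRight x := by
    have := fderiv_fun_smul hsd (differentiableAt_fun_id (x := x))
    rw [this, fderiv_id']
  -- compute each summand of the divergence
  have key : ∀ i : Fin n,
      fderiv ℝ (fun y => (⟪y, gradient u y⟫ : ℝ) • gradient u y - s y • y) x
        (EuclideanSpace.single i 1) i
      = (⟪x, v⟫ : ℝ) * (H (EuclideanSpace.single i 1) i) + (H x) i * v i + v i * v i
        - (H v) i * (x i) + g (u x) * (v i * x i) - s x := by
    intro i
    set e := EuclideanSpace.single i (1 : ℝ) with hedef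
    rw [fderiv_fun_sub hAd hBd, ContinuousLinearMap.sub_apply, hfA, hfB]
    simp only [ContinuousLinearMap.add_apply, ContinuousLinearMap.smul_apply,
      ContinuousLinearMap.smulRight_apply, ContinuousLinearMap.id_apply, hc', hs']
    have he1 : e i = 1 := by simp [hedef]
    have hv_e : (⟪v, e⟫ : ℝ) = v i := by
      rw [← sum_inner' v e]
      simp [hedef, EuclideanSpace.single_apply, Finset.sum_ite_eq', mul_comm]
    have hxHe : (⟪x, H e⟫ : ℝ) = (H x) i := by
      rw [hHsym x e, ← sum_inner' e (H x)]
      simp [hedef, EuclideanSpace.single_apply, Finset.sum_ite_eq']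
    have hvHe : (⟪v, H e⟫ : ℝ) = (H v) i := by
      rw [hHsym v e, ← sum_inner' e (H v)]
      simp [hedef, EuclideanSpace.single_apply, Finset.sum_ite_eq']
    simp only [PiLp.sub_apply, PiLp.add_apply, PiLp.smul_apply, smul_eq_mul,
      hxHe, hvHe, hv_e, he1]
    ring
  -- assemble
  have hlap : lap u x = ∑ i, H (EuclideanSpace.single i 1) i := rfl
  have hsum1 : ∑ i, v i * v i = ‖v‖ ^ 2 := by
    rw [sum_inner', real_inner_self_eq_norm_sq]
  have hsum2 : ∑ i, (H x) i * v i = ∑ i, (H v) i * x i := by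
    rw [sum_inner', sum_inner']
    exact (real_inner_comm v (H x)).trans ((hHsym v x).trans (real_inner_comm (H v) x))
  have hsum3 : ∑ i, v i * x i = (⟪x, v⟫ : ℝ) := by
    rw [sum_inner', real_inner_comm]
  have hsx : s x = (1 / 2) * ‖v‖ ^ 2 - G (u x) := rfl
  unfold vecDiv
  rw [Finset.sum_congr rfl (fun i _ => key i)]
  simp only [Finset.sum_add_distrib, Finset.sum_sub_distrib, ← Finset.mul_sum,
    Finset.sum_const, Finset.card_univ, Fintype.card_fin, nsmul_eq_mul]
  rw [← hlap, hsum1, hsum2, hsum3]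
  simp only [hvdef]
  ring
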